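/- arXiv:1412.3922 — 2 statements merged into one kernel-verified Lean document; each statement's English description precedes it below -/
import Mathlib

section
/- Let G be a finite graph on vertex set V with a weight function w : V → ℝ≥0, and suppose every nonempty induced subgraph of G contains a vertex of degree at most 2d. Define the weight of an edge e = (u,v) as w(e) = min(w(u), w(v)). Then the total edge weight satisfies Σ_{e ∈ E(G)} w(e) ≤ 2d · Σ_{v ∈ V} w(v). -/
/-- If every nonempty induced subgraph of a finite graph `G` has a vertex of degree
at most `2d`, then for any nonnegative vertex weights `w`, the sum over edges of the
minimum endpoint weight is at most `2d` times the total vertex weight. -/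
theorem weighted_edge_bound_of_degenerate {V : Type*} [Fintype V] [DecidableEq V]
    (G : SimpleGraph V) [DecidableRel G.Adj] (w : V → ℝ) (hw : ∀ v, 0 ≤ w v)
    (d : ℝ) (hd : 0 < d)
    (hdeg : ∀ U : Finset V, U.Nonempty →
      ∃ v ∈ U, ((U.filter fun u => G.Adj v u).card : ℝ) ≤ 2 * d) :
    ∑ e ∈ G.edgeFinset,
        Sym2.lift ⟨fun u v => min (w u) (w v), fun u v => min_comm _ _⟩ e
      ≤ 2 * d * ∑ v, w v := by
  set f : Sym2 V → ℝ := Sym2.lift ⟨fun u v => min (w u) (w v), fun u v => min_comm _ _⟩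
    with hf
  suffices h : ∀ U : Finset V,
      ∑ e ∈ G.edgeFinset.filter (fun e => ∀ x ∈ e, x ∈ U), f e ≤ 2 * d * ∑ v ∈ U, w v by
    have := h Finset.univ
    simpa using this
  intro U
  induction U using Finset.strongInduction with
  | _ U ih =>
    rcases U.eq_empty_or_nonempty with rfl | hne
    · have h0 : ∀ e ∈ G.edgeFinset, ¬ (∀ x ∈ e, x ∈ (∅ : Finset V)) := by
        intro e he h
        induction e with
        | _ a b => exact (Finset.notMem_empty a) (h a (Sym2.mem_mk_left a b))
      rw [Finset.filter_false_of_mem h0]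
      simp
    obtain ⟨v, hvU, hvdeg⟩ := hdeg U hne
    have hsplit : ∑ e ∈ G.edgeFinset.filter (fun e => ∀ x ∈ e, x ∈ U), f e
        = ∑ e ∈ (G.edgeFinset.filter (fun e => ∀ x ∈ e, x ∈ U)).filter (fun e => v ∈ e), f e
        + ∑ e ∈ G.edgeFinset.filter (fun e => ∀ x ∈ e, x ∈ U.erase v), f e := by
      rw [← Finset.sum_filter_add_sum_filter_not
        (G.edgeFinset.filter (fun e => ∀ x ∈ e, x ∈ U)) (fun e => v ∈ e)]
      congr 1
      apply Finset.sum_congr _ (fun _ _ => rfl)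
      ext e
      simp only [Finset.mem_filter, Finset.mem_erase]
      constructor
      · rintro ⟨⟨he, hmem⟩, hv⟩
        exact ⟨he, fun x hx => ⟨fun h => hv (h ▸ hx), hmem x hx⟩⟩
      · rintro ⟨he, hmem⟩
        exact ⟨⟨he, fun x hx => (hmem x hx).2⟩, fun hv => (hmem v hv).1 rfl⟩
    have hB : (G.edgeFinset.filter (fun e => ∀ x ∈ e, x ∈ U)).filter (fun e => v ∈ e)
        = (U.filter fun u => G.Adj v u).image (fun u => s(v, u)) := by
      ext e
      induction e with
      | _ a b =>
        simp only [Finset.mem_filter, Finset.mem_image, SimpleGraph.mem_edgeFinset,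
          SimpleGraph.mem_edgeSet, Sym2.mem_iff]
        constructor
        · rintro ⟨⟨hab, hmem⟩, (rfl | rfl)⟩
          · exact ⟨b, ⟨hmem b (Or.inr rfl), hab⟩, rfl⟩
          · exact ⟨a, ⟨hmem a (Or.inl rfl), hab.symm⟩, Sym2.eq_swap⟩
        · rintro ⟨u, ⟨hu, hadj⟩, he⟩
          rcases Sym2.eq_iff.mp he with ⟨rfl, rfl⟩ | ⟨rfl, rfl⟩
          · refine ⟨⟨hadj, ?_⟩, Or.inl rfl⟩
            intro x hx
            rcases hx with rfl | rfl
            exacts [hvU, hu]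
          · refine ⟨⟨hadj.symm, ?_⟩, Or.inr rfl⟩
            intro x hx
            rcases hx with rfl | rfl
            exacts [hu, hvU]
    have hBsum : ∑ e ∈ (G.edgeFinset.filter (fun e => ∀ x ∈ e, x ∈ U)).filter
        (fun e => v ∈ e), f e ≤ 2 * d * w v := by
      rw [hB, Finset.sum_image]
      · have h1 : ∑ u ∈ U.filter (fun u => G.Adj v u), f s(v, u)
            ≤ ∑ u ∈ U.filter (fun u => G.Adj v u), w v := by
          apply Finset.sum_le_sum
          intro u _
          simp only [hf, Sym2.lift_mk]
          exact min_le_left _ _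
        refine h1.trans ?_
        rw [Finset.sum_const, nsmul_eq_mul]
        exact mul_le_mul_of_nonneg_right hvdeg (hw v)
      · intro a _ b hb hab
        rcases Sym2.eq_iff.mp hab with ⟨_, h⟩ | ⟨h1, h2⟩
        · exact h
        · exfalso
          rw [Finset.mem_coe, Finset.mem_filter] at hb
          subst h1
          exact G.irrefl hb.2
    have hIH := ih (U.erase v) (Finset.erase_ssubset hvU)
    rw [hsplit]
    have hfinal : 2 * d * w v + 2 * d * ∑ x ∈ U.erase v, w x = 2 * d * ∑ x ∈ U, w x := by
      rw [← mul_add, Finset.add_sum_erase _ _ hvU]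
    linarith
end

section
/- Let X be a finite set with |X| = n, δ an integer with 1 ≤ δ ≤ n, and let P ⊆ 2^X be a δ-separated family (any two distinct members have symmetric difference of size > δ) such that the primal shatter function of P satisfies π_P(m) ≤ C·m^d for all m, with constants C > 0, d > 1. Then |P| ≤ C'·(n/δ)^d for a constant C' depending only on C and d (Haussler's packing lemma). -/
open scoped symmDiff

section Aux
open Filter in
lemma hpl_exists_d0 (C d : ℝ) : ∃ d₀ : ℕ, 1 ≤ d₀ ∧ ∀ m : ℕ, d₀ < m → C * (m:ℝ)^d < 2^m := by
  have hb : (0:ℝ) < Real.log 2 := Real.log_pos (by norm_num)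
  have h := isLittleO_rpow_exp_pos_mul_atTop d hb
  have h2 := (h.bound (c := 1 / (|C| + 1)) (by positivity))
  have h3 : Tendsto (fun m : ℕ => (m:ℝ)) atTop atTop := tendsto_natCast_atTop_atTop
  have h4 := (h3.eventually h2).and (h3.eventually_ge_atTop 1)
  rw [eventually_atTop] at h4
  obtain ⟨N, hN⟩ := h4
  refine ⟨N + 1, by omega, fun m hm => ?_⟩
  obtain ⟨hb1, hb2⟩ := hN m (by omega)
  have hm0 : (0:ℝ) < (m:ℝ) := by linarith
  have hexp : Real.exp (Real.log 2 * (m:ℝ)) = (2:ℝ)^m := by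
    rw [← Real.rpow_def_of_pos (by norm_num), Real.rpow_natCast]
  rw [Real.norm_eq_abs, Real.norm_eq_abs, abs_of_nonneg (Real.rpow_nonneg hm0.le d),
    abs_of_nonneg (Real.exp_nonneg _), hexp] at hb1
  have hCpos : (0:ℝ) < |C| + 1 := by positivity
  have hmd : (0:ℝ) < (m:ℝ)^d := Real.rpow_pos_of_pos hm0 d
  have key : (|C| + 1) * (m:ℝ)^d ≤ (2:ℝ)^m := by
    rw [div_mul_eq_mul_div, le_div_iff₀ hCpos] at hb1
    linarith [hb1]
  nlinarith [le_abs_self C]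
end Aux


variable {α : Type*} [DecidableEq α] [Fintype α]

lemma edge_lemma (T : Finset α) (k : ℕ) (w : Finset α → ℕ)
    (hVC : ∀ Y : Finset α, (∀ Z ⊆ Y, ∃ B, w B ≠ 0 ∧ B ∩ Y = Z) → Y.card ≤ k) :
    ∑ x ∈ T, ∑ A ∈ (T.erase x).powerset, min (w A) (w (insert x A))
      ≤ k * ∑ B ∈ T.powerset, w B := by
  classical
  induction T using Finset.induction_on generalizing w k with
  | empty => simp
  | @insert x₀ T' hx₀ IH =>
    set w' : Finset α → ℕ := fun A => if A ⊆ T' then max (w A) (w (insert x₀ A)) else 0 with hw'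
    set w'' : Finset α → ℕ := fun A => if A ⊆ T' then min (w A) (w (insert x₀ A)) else 0 with hw''
    have hinj : ∀ A ∈ T'.powerset, ∀ B ∈ T'.powerset, insert x₀ A = insert x₀ B → A = B := by
      intro A hA B hB h
      simp only [Finset.mem_powerset] at hA hB
      have hxA : x₀ ∉ A := fun h' => hx₀ (hA h')
      have hxB : x₀ ∉ B := fun h' => hx₀ (hB h')
      rw [← Finset.erase_insert hxA, ← Finset.erase_insert hxB, h]
    have hdisj : Disjoint T'.powerset (T'.powerset.image (insert x₀)) := by
      rw [Finset.disjoint_right]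
      rintro B hB hB'
      simp only [Finset.mem_image, Finset.mem_powerset] at hB hB'
      obtain ⟨A, hA, rfl⟩ := hB
      exact hx₀ (hB' (Finset.mem_insert_self _ _))
    have hsum0 : ∑ B ∈ (insert x₀ T').powerset, w B
        = ∑ A ∈ T'.powerset, (w A + w (insert x₀ A)) := by
      rw [Finset.powerset_insert, Finset.sum_union hdisj, Finset.sum_image hinj,
        ← Finset.sum_add_distrib]
    have hsum : ∑ B ∈ (insert x₀ T').powerset, w B
        = ∑ A ∈ T'.powerset, w' A + ∑ A ∈ T'.powerset, w'' A := by
      rw [hsum0, ← Finset.sum_add_distrib]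
      refine Finset.sum_congr rfl fun A hA => ?_
      simp only [Finset.mem_powerset] at hA
      simp only [hw', hw'', if_pos hA]
      omega
    -- VC condition for w'
    have hVC' : ∀ Y : Finset α, (∀ Z ⊆ Y, ∃ B, w' B ≠ 0 ∧ B ∩ Y = Z) → Y.card ≤ k := by
      intro Y hY
      have hx₀Y : x₀ ∉ Y := by
        obtain ⟨B, hB, hBY⟩ := hY Y le_rfl
        intro hmem
        have hBT' : B ⊆ T' := by
          by_contra h
          simp only [hw', if_neg h] at hB
          exact hB rfl
        have : x₀ ∈ B := by rw [← hBY] at hmem; exact (Finset.mem_inter.1 hmem).1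
        exact hx₀ (hBT' this)
      refine hVC Y fun Z hZ => ?_
      obtain ⟨B, hB, hBY⟩ := hY Z hZ
      have hBT' : B ⊆ T' := by
        by_contra h
        simp only [hw', if_neg h] at hB
        exact hB rfl
      simp only [hw', if_pos hBT'] at hB
      rcases Nat.eq_zero_or_pos (w B) with h0 | hpos
      · refine ⟨insert x₀ B, ?_, ?_⟩
        · omega
        · rw [Finset.insert_inter_of_notMem hx₀Y, hBY]
      · exact ⟨B, by omega, hBY⟩
    -- split LHS
    have hT'erase : (insert x₀ T').erase x₀ = T' := Finset.erase_insert hx₀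
    rw [Finset.sum_insert hx₀, hsum, hT'erase]
    have hterm0 : ∑ A ∈ T'.powerset, min (w A) (w (insert x₀ A)) = ∑ A ∈ T'.powerset, w'' A := by
      refine Finset.sum_congr rfl fun A hA => ?_
      simp only [Finset.mem_powerset] at hA
      simp [hw'', if_pos hA]
    -- per-x bound for x ∈ T'
    have hxbound : ∀ x ∈ T',
        ∑ A ∈ ((insert x₀ T').erase x).powerset, min (w A) (w (insert x A))
        ≤ ∑ A ∈ (T'.erase x).powerset, min (w' A) (w' (insert x A))
          + ∑ A ∈ (T'.erase x).powerset, min (w'' A) (w'' (insert x A)) := by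
      intro x hx
      have hne : x₀ ≠ x := fun h => hx₀ (h ▸ hx)
      have h1 : (insert x₀ T').erase x = insert x₀ (T'.erase x) :=
        Finset.erase_insert_of_ne hne
      have hx₀e : x₀ ∉ T'.erase x := fun h => hx₀ (Finset.mem_of_mem_erase h)
      have hdisj2 : Disjoint (T'.erase x).powerset ((T'.erase x).powerset.image (insert x₀)) := by
        rw [Finset.disjoint_right]
        rintro B hB hB'
        simp only [Finset.mem_image, Finset.mem_powerset] at hB hB'
        obtain ⟨A, hA, rfl⟩ := hB
        exact hx₀e (hB' (Finset.mem_insert_self _ _))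
      have hinj2 : ∀ A ∈ (T'.erase x).powerset, ∀ B ∈ (T'.erase x).powerset,
          insert x₀ A = insert x₀ B → A = B := by
        intro A hA B hB h
        simp only [Finset.mem_powerset] at hA hB
        have hxA : x₀ ∉ A := fun h' => hx₀e (hA h')
        have hxB : x₀ ∉ B := fun h' => hx₀e (hB h')
        rw [← Finset.erase_insert hxA, ← Finset.erase_insert hxB, h]
      rw [h1, Finset.powerset_insert, Finset.sum_union hdisj2, Finset.sum_image hinj2,
        ← Finset.sum_add_distrib, ← Finset.sum_add_distrib]
      refine Finset.sum_le_sum fun A hA => ?_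
      simp only [Finset.mem_powerset] at hA
      have hAT' : A ⊆ T' := hA.trans (Finset.erase_subset _ _)
      have hxA : x ∉ A := fun h => (Finset.mem_erase.1 (hA h)).1 rfl
      have hxAT' : insert x A ⊆ T' := Finset.insert_subset hx hAT'
      have hcomm : insert x (insert x₀ A) = insert x₀ (insert x A) := Finset.insert_comm _ _ _
      rw [hcomm]
      simp only [hw', hw'', if_pos hAT', if_pos hxAT']
      omega
    -- assemble
    calc ∑ A ∈ T'.powerset, min (w A) (w (insert x₀ A))
          + ∑ x ∈ T', ∑ A ∈ ((insert x₀ T').erase x).powerset, min (w A) (w (insert x A))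
        ≤ ∑ A ∈ T'.powerset, w'' A
          + (∑ x ∈ T', ∑ A ∈ (T'.erase x).powerset, min (w' A) (w' (insert x A))
            + ∑ x ∈ T', ∑ A ∈ (T'.erase x).powerset, min (w'' A) (w'' (insert x A))) := by
          rw [hterm0, ← Finset.sum_add_distrib]
          exact add_le_add_right (Finset.sum_le_sum hxbound) _
      _ ≤ k * (∑ A ∈ T'.powerset, w' A) + k * (∑ A ∈ T'.powerset, w'' A) := by
          by_cases hzero : ∀ A, w'' A = 0
          · have e1 : ∑ A ∈ T'.powerset, w'' A = 0 := by simp [hzero]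
            have e2 : ∑ x ∈ T', ∑ A ∈ (T'.erase x).powerset, min (w'' A) (w'' (insert x A)) = 0 := by
              refine Finset.sum_eq_zero fun x hx => Finset.sum_eq_zero fun A hA => ?_
              simp [hzero]
            rw [e1, e2]
            have := IH k w' hVC'
            omega
          · push_neg at hzero
            obtain ⟨A₀, hA₀⟩ := hzero
            have hA₀T' : A₀ ⊆ T' := by
              by_contra h; simp only [hw'', if_neg h] at hA₀; exact hA₀ rfl
            have hx₀A₀ : x₀ ∉ A₀ := fun h => hx₀ (hA₀T' h)
            simp only [hw'', if_pos hA₀T'] at hA₀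
            have hk1 : 1 ≤ k := by
              have := hVC {x₀} ?_
              · simpa using this
              · intro Z hZ
                rcases Finset.subset_singleton_iff.1 hZ with rfl | rfl
                · exact ⟨A₀, by omega, by simp [Finset.inter_singleton_of_notMem hx₀A₀]⟩
                · refine ⟨insert x₀ A₀, by omega, ?_⟩
                  rw [Finset.insert_inter_of_mem (Finset.mem_singleton_self _),
                    Finset.inter_singleton_of_notMem hx₀A₀]
                  simp
            -- VC for w'' with k - 1
            have hVC'' : ∀ Y : Finset α, (∀ Z ⊆ Y, ∃ B, w'' B ≠ 0 ∧ B ∩ Y = Z) → Y.card ≤ k - 1 := by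
              intro Y hY
              have hx₀Y : x₀ ∉ Y := by
                obtain ⟨B, hB, hBY⟩ := hY Y le_rfl
                intro hmem
                have hBT' : B ⊆ T' := by
                  by_contra h; simp only [hw'', if_neg h] at hB; exact hB rfl
                have : x₀ ∈ B := by rw [← hBY] at hmem; exact (Finset.mem_inter.1 hmem).1
                exact hx₀ (hBT' this)
              have hcard : (insert x₀ Y).card ≤ k := by
                refine hVC (insert x₀ Y) fun Z hZ => ?_
                have hZ' : Z.erase x₀ ⊆ Y := by
                  intro z hz
                  have := hZ (Finset.mem_of_mem_erase hz)
                  rcases Finset.mem_insert.1 this with h | h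
                  · exact absurd h (Finset.mem_erase.1 hz).1
                  · exact h
                obtain ⟨B, hB, hBY⟩ := hY (Z.erase x₀) hZ'
                have hBT' : B ⊆ T' := by
                  by_contra h; simp only [hw'', if_neg h] at hB; exact hB rfl
                have hx₀B : x₀ ∉ B := fun h => hx₀ (hBT' h)
                simp only [hw'', if_pos hBT'] at hB
                by_cases hx₀Z : x₀ ∈ Z
                · refine ⟨insert x₀ B, by omega, ?_⟩
                  rw [Finset.insert_inter_of_mem (Finset.mem_insert_self _ _),
                    Finset.inter_insert_of_notMem hx₀B, hBY, Finset.insert_erase hx₀Z]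
                · refine ⟨B, by omega, ?_⟩
                  rw [Finset.inter_insert_of_notMem hx₀B, hBY, Finset.erase_eq_of_notMem hx₀Z]
              rw [Finset.card_insert_of_notMem hx₀Y] at hcard
              omega
            have h1 := IH k w' hVC'
            have h2 := IH (k - 1) w'' hVC''
            have hle : (k - 1) * (∑ A ∈ T'.powerset, w'' A) + ∑ A ∈ T'.powerset, w'' A
                = k * ∑ A ∈ T'.powerset, w'' A := by
              cases k with
              | zero => omega
              | succ k' => rw [Nat.succ_sub_one, Nat.succ_mul]
            omega
      _ = k * (∑ A ∈ T'.powerset, w' A + ∑ A ∈ T'.powerset, w'' A) := by ring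


lemma class_core (K : Finset (Finset α)) (S : Finset α) (δ : ℕ)
    (hK : ∀ p ∈ K, ∀ q ∈ K, p ≠ q → δ < (p ∆ q).card)
    (hKS : ∀ p ∈ K, ∀ q ∈ K, p ∩ S = q ∩ S) :
    δ * (K.card - 1) ≤
      2 * ∑ x ∈ Sᶜ, min ((K.filter (fun p => x ∈ p)).card) ((K.filter (fun p => x ∉ p)).card) := by
  classical
  set k := K.card with hk
  rcases Nat.eq_zero_or_pos k with h0 | hpos
  · simp [← hk, h0]
  have step1 : ∀ x : α, (K.filter (fun p => x ∈ p)).card * (K.filter (fun p => x ∉ p)).card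
      = ∑ p ∈ K, ∑ q ∈ K, if x ∈ p ∧ x ∉ q then 1 else 0 := by
    intro x
    rw [Finset.card_filter, Finset.card_filter, Finset.sum_mul_sum]
    refine Finset.sum_congr rfl fun p hp => Finset.sum_congr rfl fun q hq => ?_
    by_cases h1 : x ∈ p <;> by_cases h2 : x ∉ q <;> simp [h1, h2]
  have hsub : ∀ p ∈ K, ∀ q ∈ K, p \ q ⊆ Sᶜ := by
    intro p hp q hq x hx
    rw [Finset.mem_compl]
    intro hxS
    have h1 := hKS p hp q hq
    have hxp : x ∈ p := (Finset.mem_sdiff.1 hx).1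
    have hxq : x ∉ q := (Finset.mem_sdiff.1 hx).2
    have : x ∈ p ∩ S := Finset.mem_inter.2 ⟨hxp, hxS⟩
    rw [h1] at this
    exact hxq (Finset.mem_inter.1 this).1
  have step2 : ∑ x ∈ Sᶜ, (K.filter (fun p => x ∈ p)).card * (K.filter (fun p => x ∉ p)).card
      = ∑ p ∈ K, ∑ q ∈ K, (p \ q).card := by
    simp_rw [step1]
    rw [Finset.sum_comm]
    refine Finset.sum_congr rfl fun p hp => ?_
    rw [Finset.sum_comm]
    refine Finset.sum_congr rfl fun q hq => ?_
    rw [← Finset.sum_filter, Finset.sum_const, smul_eq_mul, mul_one]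
    congr 1
    ext a
    simp only [Finset.mem_filter, Finset.mem_sdiff]
    constructor
    · rintro ⟨-, h⟩; exact h
    · intro h; exact ⟨hsub p hp q hq (Finset.mem_sdiff.2 h), h⟩
  have step3 : 2 * (∑ p ∈ K, ∑ q ∈ K, (p \ q).card) = ∑ p ∈ K, ∑ q ∈ K, (p ∆ q).card := by
    have hswap : ∑ p ∈ K, ∑ q ∈ K, (p \ q).card = ∑ p ∈ K, ∑ q ∈ K, (q \ p).card :=
      Finset.sum_comm
    rw [two_mul]
    nth_rewrite 2 [hswap]
    rw [← Finset.sum_add_distrib]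
    refine Finset.sum_congr rfl fun p hp => ?_
    rw [← Finset.sum_add_distrib]
    refine Finset.sum_congr rfl fun q hq => ?_
    rw [symmDiff_def]
    have : (p \ q) ⊔ (q \ p) = (p \ q) ∪ (q \ p) := rfl
    rw [this, Finset.card_union_of_disjoint disjoint_sdiff_sdiff]
  have step4 : k * ((k - 1) * (δ + 1)) ≤ ∑ p ∈ K, ∑ q ∈ K, (p ∆ q).card := by
    have hinner : ∀ p ∈ K, (k - 1) * (δ + 1) ≤ ∑ q ∈ K, (p ∆ q).card := by
      intro p hp
      have e1 : ∑ q ∈ K, (p ∆ q).card = (p ∆ p).card + ∑ q ∈ K.erase p, (p ∆ q).card :=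
        (Finset.add_sum_erase _ _ hp).symm
      have e2 : (p ∆ p).card = 0 := by simp
      have e3 : ∀ q ∈ K.erase p, δ + 1 ≤ (p ∆ q).card := by
        intro q hq
        have hqK := Finset.mem_of_mem_erase hq
        have hne : p ≠ q := fun h => (Finset.mem_erase.1 hq).1 h.symm
        exact hK p hp q hqK hne
      calc (k - 1) * (δ + 1) = ∑ _q ∈ K.erase p, (δ + 1) := by
            rw [Finset.sum_const, smul_eq_mul, Finset.card_erase_of_mem hp]
        _ ≤ ∑ q ∈ K.erase p, (p ∆ q).card := Finset.sum_le_sum e3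
        _ ≤ ∑ q ∈ K, (p ∆ q).card := by rw [e1, e2]; omega
      done
    calc k * ((k - 1) * (δ + 1)) = ∑ _p ∈ K, (k - 1) * (δ + 1) := by
          rw [Finset.sum_const, smul_eq_mul]
      _ ≤ _ := Finset.sum_le_sum hinner
  -- k * min ≥ a * b
  have step5 : ∀ x : α, (K.filter (fun p => x ∈ p)).card * (K.filter (fun p => x ∉ p)).card
      ≤ k * min ((K.filter (fun p => x ∈ p)).card) ((K.filter (fun p => x ∉ p)).card) := by
    intro x
    have hab := Finset.card_filter_add_card_filter_not (s := K) (fun p => x ∈ p)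
    set a := (K.filter (fun p => x ∈ p)).card
    set b := (K.filter (fun p => x ∉ p)).card
    have : a * b = min a b * max a b := (min_mul_max a b).symm
    rcases le_total a b with h | h <;> simp [min_eq_left, max_eq_right, h] at this ⊢ <;> nlinarith
  -- assemble
  have main : k * (δ * (k - 1)) ≤ k * (2 * ∑ x ∈ Sᶜ,
      min ((K.filter (fun p => x ∈ p)).card) ((K.filter (fun p => x ∉ p)).card)) := by
    calc k * (δ * (k - 1)) ≤ k * ((k - 1) * (δ + 1)) := by
          have : δ * (k-1) ≤ (k-1) * (δ+1) := by
            calc δ * (k-1) = (k-1) * δ := Nat.mul_comm _ _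
              _ ≤ (k-1)*(δ+1) := Nat.mul_le_mul_left _ (by omega)
          exact Nat.mul_le_mul_left _ this
      _ ≤ ∑ p ∈ K, ∑ q ∈ K, (p ∆ q).card := step4
      _ = 2 * (∑ p ∈ K, ∑ q ∈ K, (p \ q).card) := step3.symm
      _ = 2 * ∑ x ∈ Sᶜ, (K.filter (fun p => x ∈ p)).card * (K.filter (fun p => x ∉ p)).card := by
          rw [step2]
      _ ≤ 2 * ∑ x ∈ Sᶜ, k * min ((K.filter (fun p => x ∈ p)).card)
            ((K.filter (fun p => x ∉ p)).card) := by
          exact Nat.mul_le_mul_left _ (Finset.sum_le_sum fun x _ => step5 x)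
      _ = k * (2 * ∑ x ∈ Sᶜ, min ((K.filter (fun p => x ∈ p)).card)
            ((K.filter (fun p => x ∉ p)).card)) := by
          simp_rw [Finset.mul_sum]
          exact Finset.sum_congr rfl fun x _ => by ring
  exact Nat.le_of_mul_le_mul_left main hpos


def traceW (P : Finset (Finset α)) (T B : Finset α) : ℕ :=
  (P.filter (fun p => p ∩ T = B)).card

lemma fiber_id1 (P : Finset (Finset α)) (S A : Finset α) (x : α) (hx : x ∉ S) (hA : A ⊆ S) :
    (P.filter (fun p => p ∩ S = A)).filter (fun p => x ∈ p)
      = P.filter (fun p => p ∩ insert x S = insert x A) := by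
  ext p
  simp only [Finset.mem_filter, and_assoc]
  constructor
  · rintro ⟨hp, hpS, hxp⟩
    exact ⟨hp, by rw [Finset.inter_insert_of_mem hxp, hpS]⟩
  · rintro ⟨hp, heq⟩
    have hxp : x ∈ p := by
      have : x ∈ p ∩ insert x S := heq ▸ Finset.mem_insert_self x A
      exact (Finset.mem_inter.1 this).1
    refine ⟨hp, ?_, hxp⟩
    have h1 : p ∩ S = (p ∩ insert x S) ∩ S := by
      rw [Finset.inter_assoc]
      congr 1
      rw [Finset.insert_inter_of_notMem hx, Finset.inter_self]
    rw [h1, heq, Finset.insert_inter_of_notMem hx, Finset.inter_eq_left.2 hA]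

lemma fiber_id2 (P : Finset (Finset α)) (S A : Finset α) (x : α) (hx : x ∉ S) (hA : A ⊆ S) :
    (P.filter (fun p => p ∩ S = A)).filter (fun p => x ∉ p)
      = P.filter (fun p => p ∩ insert x S = A) := by
  ext p
  simp only [Finset.mem_filter, and_assoc]
  constructor
  · rintro ⟨hp, hpS, hxp⟩
    exact ⟨hp, by rw [Finset.inter_insert_of_notMem hxp, hpS]⟩
  · rintro ⟨hp, heq⟩
    have hxp : x ∉ p := by
      intro hxp
      rw [Finset.inter_insert_of_mem hxp] at heq
      have : x ∈ A := heq ▸ Finset.mem_insert_self x _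
      exact hx (hA this)
    rw [Finset.inter_insert_of_notMem hxp] at heq
    exact ⟨hp, heq, hxp⟩

lemma per_S (P : Finset (Finset α)) (S : Finset α) (δ : ℕ)
    (hsep : ∀ p ∈ P, ∀ q ∈ P, p ≠ q → δ < (p ∆ q).card) :
    δ * (P.card - (P.image (fun p => p ∩ S)).card) ≤
      2 * ∑ x ∈ Sᶜ, ∑ A ∈ S.powerset,
        min (traceW P (insert x S) A) (traceW P (insert x S) (insert x A)) := by
  classical
  set Q := P.image (fun p => p ∩ S) with hQ
  have hQpow : Q ⊆ S.powerset := by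
    intro A hA
    obtain ⟨p, hp, rfl⟩ := Finset.mem_image.1 hA
    exact Finset.mem_powerset.2 Finset.inter_subset_right
  set K : Finset α → Finset (Finset α) := fun A => P.filter (fun p => p ∩ S = A) with hK
  have hcard : P.card = ∑ A ∈ Q, (K A).card :=
    Finset.card_eq_sum_card_fiberwise (fun p hp => Finset.mem_image_of_mem _ hp)
  have hposK : ∀ A ∈ Q, 1 ≤ (K A).card := by
    intro A hA
    obtain ⟨p, hp, rfl⟩ := Finset.mem_image.1 hA
    refine Finset.card_pos.2 ⟨p, Finset.mem_filter.2 ⟨hp, rfl⟩⟩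
  have hdiff : P.card - Q.card = ∑ A ∈ Q, ((K A).card - 1) := by
    have h1 : ∑ A ∈ Q, ((K A).card - 1) + Q.card = P.card := by
      rw [hcard, Finset.card_eq_sum_ones Q, ← Finset.sum_add_distrib]
      exact Finset.sum_congr rfl fun A hA => by have := hposK A hA; omega
    omega
  -- per class bound
  have hclass : ∀ A ∈ Q, δ * ((K A).card - 1) ≤
      2 * ∑ x ∈ Sᶜ, min (traceW P (insert x S) A) (traceW P (insert x S) (insert x A)) := by
    intro A hA
    have hAS : A ⊆ S := Finset.mem_powerset.1 (hQpow hA)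
    have hcore := class_core (K A) S δ
      (fun p hp q hq hne => hsep p (Finset.mem_of_mem_filter p hp) q (Finset.mem_of_mem_filter q hq) hne)
      (fun p hp q hq => by
        rw [(Finset.mem_filter.1 hp).2, (Finset.mem_filter.1 hq).2])
    refine hcore.trans (le_of_eq ?_)
    congr 1
    refine Finset.sum_congr rfl fun x hx => ?_
    have hxS : x ∉ S := Finset.mem_compl.1 hx
    rw [fiber_id1 P S A x hxS hAS, fiber_id2 P S A x hxS hAS]
    rw [min_comm]
    rfl
  calc δ * (P.card - Q.card) = ∑ A ∈ Q, δ * ((K A).card - 1) := by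
        rw [hdiff, Finset.mul_sum]
    _ ≤ ∑ A ∈ Q, 2 * ∑ x ∈ Sᶜ, min (traceW P (insert x S) A) (traceW P (insert x S) (insert x A)) :=
        Finset.sum_le_sum hclass
    _ = 2 * ∑ x ∈ Sᶜ, ∑ A ∈ Q, min (traceW P (insert x S) A) (traceW P (insert x S) (insert x A)) := by
        rw [← Finset.mul_sum, Finset.sum_comm]
    _ ≤ 2 * ∑ x ∈ Sᶜ, ∑ A ∈ S.powerset,
          min (traceW P (insert x S) A) (traceW P (insert x S) (insert x A)) := by
        refine Nat.mul_le_mul_left _ (Finset.sum_le_sum fun x hx => ?_)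
        exact Finset.sum_le_sum_of_subset hQpow




lemma traceW_sum (P : Finset (Finset α)) (T : Finset α) :
    ∑ B ∈ T.powerset, traceW P T B = P.card :=
  (Finset.card_eq_sum_card_fiberwise
    (fun p _ => Finset.mem_powerset.2 Finset.inter_subset_right)).symm

lemma per_T (P : Finset (Finset α)) (T : Finset α) (d₀ : ℕ)
    (hVC : ∀ Y : Finset α, (∀ Z ⊆ Y, ∃ B, traceW P T B ≠ 0 ∧ B ∩ Y = Z) → Y.card ≤ d₀)
    (hedge : ∀ (T' : Finset α) (k : ℕ) (w : Finset α → ℕ),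
      (∀ Y : Finset α, (∀ Z ⊆ Y, ∃ B, w B ≠ 0 ∧ B ∩ Y = Z) → Y.card ≤ k) →
      ∑ x ∈ T', ∑ A ∈ (T'.erase x).powerset, min (w A) (w (insert x A))
        ≤ k * ∑ B ∈ T'.powerset, w B) :
    ∑ x ∈ T, ∑ A ∈ (T.erase x).powerset,
        min (traceW P (insert x (T.erase x)) A) (traceW P (insert x (T.erase x)) (insert x A))
      ≤ d₀ * P.card := by
  have h := hedge T d₀ (traceW P T) hVC
  rw [traceW_sum] at h
  refine le_trans (le_of_eq ?_) h
  refine Finset.sum_congr rfl fun x hx => ?_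
  rw [Finset.insert_erase hx]


lemma double_count (g : Finset α → α → ℕ) (s : ℕ) :
    ∑ S ∈ Finset.powersetCard s (Finset.univ : Finset α), ∑ x ∈ Sᶜ, g S x
    = ∑ T ∈ Finset.powersetCard (s + 1) (Finset.univ : Finset α), ∑ x ∈ T, g (T.erase x) x := by
  classical
  rw [Finset.sum_sigma' (Finset.powersetCard s Finset.univ) (fun S => Sᶜ) (fun S x => g S x),
    Finset.sum_sigma' (Finset.powersetCard (s + 1) Finset.univ) (fun T => T)
      (fun T x => g (T.erase x) x)]
  refine Finset.sum_bij' (fun a _ => (⟨insert a.2 a.1, a.2⟩ : Σ _ : Finset α, α))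
    (fun b _ => (⟨b.1.erase b.2, b.2⟩ : Σ _ : Finset α, α)) ?_ ?_ ?_ ?_ ?_
  · rintro ⟨S, x⟩ ha
    simp only [Finset.mem_sigma, Finset.mem_powersetCard_univ, Finset.mem_compl] at ha ⊢
    obtain ⟨hS, hx⟩ := ha
    exact ⟨by rw [Finset.card_insert_of_notMem hx, hS], Finset.mem_insert_self _ _⟩
  · rintro ⟨T, x⟩ hb
    simp only [Finset.mem_sigma, Finset.mem_powersetCard_univ, Finset.mem_compl] at hb ⊢
    obtain ⟨hT, hx⟩ := hb
    refine ⟨by rw [Finset.card_erase_of_mem hx, hT]; omega, Finset.notMem_erase _ _⟩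
  · rintro ⟨S, x⟩ ha
    simp only [Finset.mem_sigma, Finset.mem_powersetCard_univ, Finset.mem_compl] at ha
    simp [Finset.erase_insert ha.2]
  · rintro ⟨T, x⟩ hb
    simp only [Finset.mem_sigma, Finset.mem_powersetCard_univ, Finset.mem_compl] at hb
    simp [Finset.insert_erase hb.2]
  · rintro ⟨S, x⟩ ha
    simp only [Finset.mem_sigma, Finset.mem_powersetCard_univ, Finset.mem_compl] at ha
    simp [Finset.erase_insert ha.2]

lemma hpl_arith_A (dl NS NT D Pc SQ Csd : ℝ)
    (h1 : dl*(NS*Pc - SQ) ≤ 2*(NT*(D*Pc))) (h2 : 4*D*NT ≤ dl*NS)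
    (h3 : SQ ≤ NS*Csd) (hNS : 0 < NS) (hdl : 0 < dl) (hPc : 0 ≤ Pc) :
    Pc ≤ 2*Csd := by
  nlinarith [mul_le_mul_of_nonneg_right h2 hPc, mul_le_mul_of_nonneg_left h3 hdl.le,
    mul_pos hdl hNS]

lemma hpl_arith_B (NT NS sR nR dl D : ℝ)
    (h1 : NT*(sR+1) = NS*(nR-sR)) (h2 : 4*D*(nR-sR) ≤ dl*(sR+1))
    (hNS : 0 ≤ NS) (hNT : 0 ≤ NT) (hs : 0 < sR+1) :
    4*D*NT ≤ dl*NS := by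
  have h4 : 4*D*NT*(sR+1) = 4*D*(NS*(nR-sR)) := by rw [← h1]; ring
  nlinarith [h4, mul_le_mul_of_nonneg_left h2 hNS, hs]

set_option maxHeartbeats 2000000 in
lemma haussler_main {α : Type} [Fintype α] [DecidableEq α] (C d : ℝ) (hC : 0 < C) (hd : 1 < d)
    (d₀ : ℕ) (hd₀1 : 1 ≤ d₀) (hd₀ : ∀ m : ℕ, d₀ < m → C * (m:ℝ)^d < 2^m)
    (n δ : ℕ) (P : Finset (Finset α))
    (hn : Fintype.card α = n) (hδ1 : 1 ≤ δ) (hδn : δ ≤ n)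
    (hsep : ∀ P₁ ∈ P, ∀ P₂ ∈ P, P₁ ≠ P₂ → δ < (P₁ ∆ P₂).card)
    (hshat : ∀ Y : Finset α, Y.Nonempty →
      (((P.image fun p => p ∩ Y).card : ℝ)) ≤ C * (Y.card : ℝ) ^ d) :
    (P.card : ℝ) ≤ 2 * C * (4 * (d₀:ℝ)) ^ d * ((n : ℝ) / δ) ^ d := by
  have hd0 : (0:ℝ) ≤ d := by linarith
  have hd₀R : (1:ℝ) ≤ (d₀:ℝ) := by exact_mod_cast hd₀1
  have h4 : (0:ℝ) < 4*(d₀:ℝ) := by linarith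
  have hn1 : 1 ≤ n := le_trans hδ1 hδn
  have hδR : (0:ℝ) < (δ:ℝ) := by exact_mod_cast hδ1
  have hnR : (0:ℝ) < (n:ℝ) := by exact_mod_cast hn1
  -- VC dimension bound for all trace families
  have hVCall : ∀ T Y : Finset α, (∀ Z ⊆ Y, ∃ B, traceW P T B ≠ 0 ∧ B ∩ Y = Z) → Y.card ≤ d₀ := by
    intro T Y hsh
    by_contra hcon
    push_neg at hcon
    have hYne : Y.Nonempty := Finset.card_pos.1 (by omega)
    have hYT : Y ⊆ T := by
      obtain ⟨B, hB, hBY⟩ := hsh Y le_rfl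
      obtain ⟨p, hp⟩ := Finset.card_pos.1 (Nat.pos_of_ne_zero hB)
      have hpB := (Finset.mem_filter.1 hp).2
      intro y hy
      have hyB : y ∈ B := by
        rw [← hBY] at hy; exact (Finset.mem_inter.1 hy).1
      rw [← hpB] at hyB
      exact (Finset.mem_inter.1 hyB).2
    have hpow : Y.powerset ⊆ P.image (fun p => p ∩ Y) := by
      intro Z hZ
      obtain ⟨B, hB, hBY⟩ := hsh Z (Finset.mem_powerset.1 hZ)
      obtain ⟨p, hp⟩ := Finset.card_pos.1 (Nat.pos_of_ne_zero hB)
      have hpmem := (Finset.mem_filter.1 hp).1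
      have hpB := (Finset.mem_filter.1 hp).2
      refine Finset.mem_image.2 ⟨p, hpmem, ?_⟩
      have h1 : p ∩ Y = (p ∩ T) ∩ Y := by
        rw [Finset.inter_assoc, Finset.inter_eq_right.2 hYT]
      rw [h1, hpB, hBY]
    have hcard : 2 ^ Y.card ≤ (P.image (fun p => p ∩ Y)).card := by
      calc 2 ^ Y.card = Y.powerset.card := (Finset.card_powerset Y).symm
        _ ≤ _ := Finset.card_le_card hpow
    have hR : ((2:ℝ)) ^ Y.card ≤ ((P.image (fun p => p ∩ Y)).card : ℝ) := by exact_mod_cast hcard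
    have hshY := hshat Y hYne
    have hsmall := hd₀ Y.card hcon
    linarith
  -- numerology
  obtain ⟨q, hq⟩ : ∃ x, x = 4 * d₀ * n := ⟨_, rfl⟩
  obtain ⟨s1, hs1def⟩ : ∃ x, x = (q + δ - 1) / δ := ⟨_, rfl⟩
  have hδ0 : 0 < δ := hδ1
  have hmod : δ * s1 + (q + δ - 1) % δ = q + δ - 1 := by
    rw [hs1def]; exact Nat.div_add_mod _ _
  have hlt : (q + δ - 1) % δ < δ := Nat.mod_lt _ hδ0
  have hq4 : 4 ≤ q := by
    have h1 : (4 * 1) * 1 ≤ (4 * d₀) * n := Nat.mul_le_mul (Nat.mul_le_mul_left 4 hd₀1) hn1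
    simpa [hq] using h1
  have hceil2 : δ * s1 ≤ q + δ - 1 := le_trans (Nat.le_add_right _ _) (le_of_eq hmod)
  have hceil1 : q ≤ δ * s1 := by
    have h2 : δ * s1 = q + δ - 1 - (q + δ - 1) % δ := Nat.eq_sub_of_add_eq hmod
    rw [h2]; omega
  have hs1pos : 1 ≤ s1 := by
    rcases Nat.eq_zero_or_pos s1 with h | h
    · rw [h, Nat.mul_zero] at hceil1; omega
    · exact h
  obtain ⟨s, hsdef⟩ : ∃ x, x = s1 - 1 := ⟨_, rfl⟩
  have hs1s : s + 1 = s1 := by omega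
  by_cases hcase : s1 ≤ n
  · -- main case
    have hsn : s < n := by omega
    have hs14 : 4 ≤ s1 := by
      have h1 : 4 * δ ≤ q := by
        calc 4 * δ ≤ 4 * n := Nat.mul_le_mul_left 4 hδn
          _ ≤ 4 * (d₀ * n) := Nat.mul_le_mul_left 4 (Nat.le_mul_of_pos_left n hd₀1)
          _ = q := by rw [hq, Nat.mul_assoc]
      have h2 : δ * 4 ≤ δ * s1 := by
        calc δ * 4 = 4 * δ := Nat.mul_comm _ _
          _ ≤ q := h1
          _ ≤ δ * s1 := hceil1
      exact Nat.le_of_mul_le_mul_left h2 hδ0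
    have hs1' : 1 ≤ s := by omega
    have hsle : (s:ℝ) ≤ 4*(d₀:ℝ)*(n:ℝ)/(δ:ℝ) := by
      have hδs : (δ:ℝ)*(s:ℝ) ≤ 4*(d₀:ℝ)*(n:ℝ) := by
        have h1 : ((δ * s1 : ℕ):ℝ) ≤ ((q + δ - 1 : ℕ):ℝ) := by exact_mod_cast hceil2
        have h2 : ((q + δ - 1 : ℕ):ℝ) = (q:ℝ) + (δ:ℝ) - 1 := by
          rw [Nat.cast_sub (by omega)]; push_cast; ring
        have hs1R : ((s1:ℕ):ℝ) = (s:ℝ)+1 := by exact_mod_cast hs1s.symm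
        have hq' : (q:ℝ) = 4*(d₀:ℝ)*(n:ℝ) := by rw [hq]; push_cast; ring
        rw [Nat.cast_mul, hs1R, h2, hq'] at h1
        nlinarith
      rw [le_div_iff₀ hδR]
      nlinarith
    have hrpow : (s:ℝ)^d ≤ (4*(d₀:ℝ))^d * ((n:ℝ)/(δ:ℝ))^d := by
      have h1 : (s:ℝ)^d ≤ (4*(d₀:ℝ)*(n:ℝ)/(δ:ℝ))^d :=
        Real.rpow_le_rpow (Nat.cast_nonneg s) hsle hd0
      have h2 : (4*(d₀:ℝ)*(n:ℝ)/(δ:ℝ)) = (4*(d₀:ℝ))*((n:ℝ)/(δ:ℝ)) := by ring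
      rw [h2] at h1
      rwa [Real.mul_rpow (by positivity) (by positivity)] at h1
    set 𝒮 := Finset.powersetCard s (Finset.univ : Finset α) with h𝒮
    set 𝒯 := Finset.powersetCard (s+1) (Finset.univ : Finset α) with h𝒯
    have hcard𝒮 : 𝒮.card = n.choose s := by
      rw [h𝒮, Finset.card_powersetCard, Finset.card_univ, hn]
    have hcard𝒯 : 𝒯.card = n.choose (s+1) := by
      rw [h𝒯, Finset.card_powersetCard, Finset.card_univ, hn]
    set gg : Finset α → α → ℕ := fun S x => ∑ A ∈ S.powerset,
      min (traceW P (insert x S) A) (traceW P (insert x S) (insert x A)) with hgg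
    have hlow : ∀ S ∈ 𝒮, δ * (P.card - (P.image (fun p => p ∩ S)).card)
        ≤ 2 * ∑ x ∈ Sᶜ, gg S x := fun S _ => per_S P S δ hsep
    have hdc : ∑ S ∈ 𝒮, ∑ x ∈ Sᶜ, gg S x = ∑ T ∈ 𝒯, ∑ x ∈ T, gg (T.erase x) x :=
      double_count gg s
    have hup : ∀ T ∈ 𝒯, ∑ x ∈ T, gg (T.erase x) x ≤ d₀ * P.card :=
      fun T _ => per_T P T d₀ (hVCall T) (fun T' k w hw => edge_lemma T' k w hw)
    have hNchain : ∑ S ∈ 𝒮, (δ * (P.card - (P.image (fun p => p ∩ S)).card))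
        ≤ 2 * (𝒯.card * (d₀ * P.card)) := by
      calc ∑ S ∈ 𝒮, (δ * (P.card - (P.image (fun p => p ∩ S)).card))
          ≤ ∑ S ∈ 𝒮, 2 * ∑ x ∈ Sᶜ, gg S x := Finset.sum_le_sum hlow
        _ = 2 * ∑ S ∈ 𝒮, ∑ x ∈ Sᶜ, gg S x := by rw [Finset.mul_sum]
        _ = 2 * ∑ T ∈ 𝒯, ∑ x ∈ T, gg (T.erase x) x := by rw [hdc]
        _ ≤ 2 * ∑ _T ∈ 𝒯, d₀ * P.card :=
            Nat.mul_le_mul_left 2 (Finset.sum_le_sum hup)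
        _ = 2 * (𝒯.card * (d₀ * P.card)) := by rw [Finset.sum_const, smul_eq_mul]
    have himgle : ∀ S : Finset α, (P.image (fun p => p ∩ S)).card ≤ P.card :=
      fun S => Finset.card_image_le
    have hcast : ((∑ S ∈ 𝒮, (δ * (P.card - (P.image (fun p => p ∩ S)).card)) : ℕ) : ℝ)
        = (δ:ℝ) * ((𝒮.card : ℝ) * P.card - ∑ S ∈ 𝒮, ((P.image (fun p => p ∩ S)).card : ℝ)) := by
      rw [Nat.cast_sum]
      have heq : ∀ S ∈ 𝒮, ((δ * (P.card - (P.image (fun p => p ∩ S)).card) : ℕ) : ℝ)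
          = (δ:ℝ) * ((P.card : ℝ) - ((P.image (fun p => p ∩ S)).card : ℝ)) := by
        intro S _
        rw [Nat.cast_mul, Nat.cast_sub (himgle S)]
      rw [Finset.sum_congr rfl heq, ← Finset.mul_sum, Finset.sum_sub_distrib,
        Finset.sum_const, nsmul_eq_mul]
    have hreal1 : (δ:ℝ) * ((𝒮.card : ℝ) * P.card - ∑ S ∈ 𝒮, ((P.image (fun p => p ∩ S)).card : ℝ))
        ≤ 2 * ((𝒯.card : ℝ) * ((d₀:ℝ) * P.card)) := by
      rw [← hcast]
      exact_mod_cast hNchain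
    have hsumQ : ∑ S ∈ 𝒮, ((P.image (fun p => p ∩ S)).card : ℝ)
        ≤ (𝒮.card : ℝ) * (C * (s:ℝ)^d) := by
      calc ∑ S ∈ 𝒮, ((P.image (fun p => p ∩ S)).card : ℝ)
          ≤ ∑ S ∈ 𝒮, C * (s:ℝ)^d := by
            refine Finset.sum_le_sum fun S hS => ?_
            have hScard : S.card = s := Finset.mem_powersetCard_univ.1 hS
            have hSne : S.Nonempty := Finset.card_pos.1 (by omega)
            have h := hshat S hSne
            rw [hScard] at h
            exact h
        _ = (𝒮.card : ℝ) * (C * (s:ℝ)^d) := by rw [Finset.sum_const, nsmul_eq_mul]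
    have hchooseId : (𝒯.card : ℝ) * ((s:ℝ)+1) = (𝒮.card : ℝ) * ((n:ℝ) - s) := by
      have hℕ : 𝒯.card * (s+1) = 𝒮.card * (n - s) := by
        rw [hcard𝒮, hcard𝒯]; exact Nat.choose_succ_right_eq n s
      calc (𝒯.card : ℝ) * ((s:ℝ)+1) = ((𝒯.card * (s+1) : ℕ) : ℝ) := by push_cast; ring
        _ = ((𝒮.card * (n - s) : ℕ) : ℝ) := by rw [hℕ]
        _ = (𝒮.card : ℝ) * ((n:ℝ) - s) := by
            rw [Nat.cast_mul, Nat.cast_sub hsn.le]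
    have h4d2 : 4*(d₀:ℝ)*((n:ℝ) - s) ≤ (δ:ℝ)*((s:ℝ)+1) := by
      have h1 : (q:ℝ) ≤ (δ:ℝ)*(s1:ℝ) := by exact_mod_cast hceil1
      have hq' : (q:ℝ) = 4*(d₀:ℝ)*(n:ℝ) := by rw [hq]; push_cast; ring
      have hs1R : ((s1:ℕ):ℝ) = (s:ℝ)+1 := by exact_mod_cast hs1s.symm
      have hsnn : (0:ℝ) ≤ (s:ℝ) := Nat.cast_nonneg s
      nlinarith only [h1, hq', hs1R, hsnn, hd₀R, mul_nonneg (by linarith only [hd₀R] : (0:ℝ) ≤ 4*(d₀:ℝ)) hsnn]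
    have h𝒮pos : (0:ℝ) < (𝒮.card : ℝ) := by
      have hch : 0 < n.choose s := Nat.choose_pos hsn.le
      rw [hcard𝒮]; exact_mod_cast hch
    have h𝒯nn : (0:ℝ) ≤ (𝒯.card : ℝ) := Nat.cast_nonneg _
    have hR6 : 4*(d₀:ℝ)*(𝒯.card : ℝ) ≤ (δ:ℝ)*(𝒮.card : ℝ) := by
      exact hpl_arith_B _ _ _ _ _ _ hchooseId h4d2 h𝒮pos.le h𝒯nn (by positivity)
    have hPnn : (0:ℝ) ≤ (P.card : ℝ) := Nat.cast_nonneg _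
    have hPle : (P.card:ℝ) ≤ 2*C*(s:ℝ)^d := by
      have h := hpl_arith_A _ _ _ _ _ _ _ hreal1 hR6 hsumQ h𝒮pos hδR hPnn
      linarith only [h]
    calc (P.card:ℝ) ≤ 2*C*(s:ℝ)^d := hPle
      _ ≤ 2*C*((4*(d₀:ℝ))^d * ((n:ℝ)/(δ:ℝ))^d) := by
          have h2C : (0:ℝ) ≤ 2*C := by linarith only [hC]
          exact mul_le_mul_of_nonneg_left hrpow h2C
      _ = 2 * C * (4 * (d₀:ℝ)) ^ d * ((n:ℝ)/(δ:ℝ))^d := by ring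
  · -- degenerate case : δ < 4 d₀
    push_neg at hcase
    have hδ4 : δ < 4 * d₀ := by
      have h1 : δ * n + δ ≤ δ * s1 := by
        rw [← Nat.mul_succ]
        exact Nat.mul_le_mul_left δ (by omega)
      have hceil2' : δ * s1 < q + δ := lt_of_le_of_lt hceil2 (by omega)
      have h3 : δ * n + δ < q + δ := lt_of_le_of_lt h1 hceil2'
      have h4' : δ * n < q := Nat.lt_of_add_lt_add_right h3
      rw [hq] at h4'
      exact lt_of_mul_lt_mul_right h4' (Nat.zero_le n)
    have hNe : (Finset.univ : Finset α).Nonempty :=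
      Finset.card_pos.1 (by rw [Finset.card_univ, hn]; omega)
    have himg : P.image (fun p => p ∩ Finset.univ) = P := by
      simp [Finset.inter_univ]
    have hPn : (P.card : ℝ) ≤ C * (n:ℝ)^d := by
      have h := hshat Finset.univ hNe
      rw [himg, Finset.card_univ, hn] at h
      exact h
    have hδ4R : (δ:ℝ) ≤ 4*(d₀:ℝ) := by exact_mod_cast hδ4.le
    have hfrac : (n:ℝ)/(4*(d₀:ℝ)) ≤ (n:ℝ)/(δ:ℝ) := by
      rw [div_le_div_iff₀ h4 hδR]
      nlinarith
    have hkey : (4*(d₀:ℝ))^d * ((n:ℝ)/(4*(d₀:ℝ)))^d = (n:ℝ)^d := by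
      rw [← Real.mul_rpow (by positivity) (by positivity)]
      congr 1
      field_simp
    have hmono : ((n:ℝ)/(4*(d₀:ℝ)))^d ≤ ((n:ℝ)/(δ:ℝ))^d :=
      Real.rpow_le_rpow (by positivity) hfrac hd0
    have hApos : (0:ℝ) ≤ (4*(d₀:ℝ))^d := (Real.rpow_pos_of_pos h4 d).le
    calc (P.card:ℝ) ≤ C * (n:ℝ)^d := hPn
      _ = C * ((4*(d₀:ℝ))^d * ((n:ℝ)/(4*(d₀:ℝ)))^d) := by rw [hkey]
      _ ≤ 2 * C * (4 * (d₀:ℝ)) ^ d * ((n:ℝ)/(δ:ℝ))^d := by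
          have hB2 : (0:ℝ) ≤ ((n:ℝ)/(δ:ℝ))^d :=
            Real.rpow_nonneg (by positivity) d
          nlinarith only [mul_le_mul_of_nonneg_left hmono (mul_nonneg hC.le hApos),
            mul_nonneg (mul_nonneg hC.le hApos) hB2]

/-- Haussler's packing lemma: for constants `C > 0`, `d > 1` there is `C' > 0`
such that any `δ`-separated family `P` on an `n`-point set whose primal shatter
function satisfies `π_P(m) ≤ C·m^d` has `|P| ≤ C'·(n/δ)^d`. -/
theorem haussler_packing (C d : ℝ) (hC : 0 < C) (hd : 1 < d) :
    ∃ C' : ℝ, 0 < C' ∧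
      ∀ (α : Type) (_ : Fintype α) (_ : DecidableEq α) (n δ : ℕ)
        (P : Finset (Finset α)),
        Fintype.card α = n → 1 ≤ δ → δ ≤ n →
        (∀ P₁ ∈ P, ∀ P₂ ∈ P, P₁ ≠ P₂ → δ < (P₁ ∆ P₂).card) →
        (∀ Y : Finset α, Y.Nonempty →
          (((P.image fun p => p ∩ Y).card : ℝ)) ≤ C * (Y.card : ℝ) ^ d) →
        (P.card : ℝ) ≤ C' * ((n : ℝ) / δ) ^ d := by
  obtain ⟨d₀, hd₀1, hd₀⟩ := hpl_exists_d0 C d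
  have hd₀R : (1:ℝ) ≤ (d₀:ℝ) := by exact_mod_cast hd₀1
  have h4 : (0:ℝ) < 4*(d₀:ℝ) := by linarith
  refine ⟨2 * C * (4 * (d₀:ℝ)) ^ d, ?_, ?_⟩
  · have := Real.rpow_pos_of_pos h4 d
    positivity
  · intro α hF hD n δ P hn hδ1 hδn hsep hshat
    exact @haussler_main α hF hD C d hC hd d₀ hd₀1 hd₀ n δ P hn hδ1 hδn hsep hshat
end
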